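/- (Learned clauses preserve D^pu of an outermost universal variable) Let ∀uΠφ be a QBF whose outermost variable u is universal, and let C be a clause derivable from ∀uΠφ in LDQ(D^pu)-Res. Then for every existential variable x: (u,x) ∈ D^pu(∀uΠφ) if and only if (u,x) ∈ D^pu(∀uΠ(φ∧C)); that is, C can be soundly used to calculate D^pu dependencies of u as if C were an input clause. -/
import Mathlib


/-! ## Literals, clauses, DQBFs -/

structure Lit (V : Type) where
  var : V
  pos : Bool
deriving DecidableEq

def Lit.negate {V : Type} (l : Lit V) : Lit V := ⟨l.var, !l.pos⟩

abbrev Clause (V : Type) [DecidableEq V] : Type := Finset (Lit V)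

/-- An S-form DQBF: universal variables `U`, existential variables `E`,
dependency sets `dep` (only meaningful on `E`), and a CNF matrix. -/
structure DQBF (V : Type) [DecidableEq V] where
  U : Finset V
  E : Finset V
  dep : V → Finset V
  matrix : Finset (Clause V)

variable {V : Type} [DecidableEq V]

/-- Well-formedness of a DQBF. -/
def DQBF.WF (ψ : DQBF V) : Prop :=
  Disjoint ψ.U ψ.E ∧ (∀ x ∈ ψ.E, ψ.dep x ⊆ ψ.U) ∧
    ∀ C ∈ ψ.matrix, ∀ l ∈ C, l.var ∈ ψ.U ∪ ψ.E

/-- Dependency set with the convention `D_u = {u}` for universal variables. -/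
def DQBF.depOf (ψ : DQBF V) (y : V) : Finset V := if y ∈ ψ.U then {y} else ψ.dep y

/-! ## Semantics -/

def Clause.Sat (β : V → Bool) (C : Clause V) : Prop := ∃ l ∈ C, β l.var = l.pos

/-- A Skolem function set respects the dependency sets if the value of each
existential variable only depends on the assignment to its dependency set. -/
def DQBF.Respects (ψ : DQBF V) (f : V → (V → Bool) → Bool) : Prop :=
  ∀ x ∈ ψ.E, ∀ β γ : V → Bool, (∀ u ∈ ψ.dep x, β u = γ u) → f x β = f x γ

/-- The completed assignment `β ∪ f(β)`. -/
def DQBF.Completed (ψ : DQBF V) (f : V → (V → Bool) → Bool) (β : V → Bool) : V → Bool :=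
  fun v => if v ∈ ψ.E then f v β else β v

def DQBF.IsModel (ψ : DQBF V) (f : V → (V → Bool) → Bool) : Prop :=
  ψ.Respects f ∧ ∀ β : V → Bool, ∀ C ∈ ψ.matrix, Clause.Sat (ψ.Completed f β) C

def DQBF.IsTrue (ψ : DQBF V) : Prop := ∃ f, ψ.IsModel f

/-- Flip the value of variable `u` in an assignment. -/
def flipAt (u : V) (α : V → Bool) : V → Bool := fun w => if w = u then !(α w) else α w

/-- `(α, x, u)` is a dependency witness for the Skolem function set `f`. -/
def DepWitness (ψ : DQBF V) (f : V → (V → Bool) → Bool) (α : V → Bool) (x u : V) : Prop :=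
  f x α ≠ f x (flipAt u α)

/-! ## Resolution paths and dependency schemes -/

/-- The clauses of the matrix containing the literal `w`. -/
def DQBF.litClauses (ψ : DQBF V) (w : Lit V) : Finset (Clause V) :=
  ψ.matrix.filter fun C => w ∈ C

/-- `S_u`: the existential variables depending on `u`. -/
def DQBF.Sset (ψ : DQBF V) (u : V) : Finset V := ψ.E.filter fun x => u ∈ ψ.dep x

/-- `pathl^pu(w, ψ, χ, S)`: the least set of literals on `S`-variables reachable by a
`w`-pure resolution path starting from the clauses of `χ`. -/
inductive PathLPU (ψ : DQBF V) (w : Lit V) (χ : Finset (Clause V)) (S : Finset V) :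
    Lit V → Prop
  | base {C : Clause V} {l : Lit V} : C ∈ χ → l ∈ C → l.var ∈ S → PathLPU ψ w χ S l
  | step {p l : Lit V} {Ecl : Clause V} :
      PathLPU ψ w χ S p → Ecl ∈ ψ.matrix → p.negate ∈ Ecl → w.negate ∉ Ecl →
      l ∈ Ecl → l ≠ p.negate → l.var ∈ S → PathLPU ψ w χ S l

/-- `pathc^pu(w, ψ, χ, S)`: the corresponding set of reachable clauses. -/
inductive PathCPU (ψ : DQBF V) (w : Lit V) (χ : Finset (Clause V)) (S : Finset V) :
    Clause V → Prop
  | base {C : Clause V} : C ∈ χ → PathCPU ψ w χ S C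
  | step {p : Lit V} {Ecl : Clause V} :
      PathLPU ψ w χ S p → Ecl ∈ ψ.matrix → p.negate ∈ Ecl → w.negate ∉ Ecl →
      PathCPU ψ w χ S Ecl

/-- `pathl^rrs(ψ, χ, S)`: the analogous closure without the purity requirement. -/
inductive PathLRRS (ψ : DQBF V) (χ : Finset (Clause V)) (S : Finset V) : Lit V → Prop
  | base {C : Clause V} {l : Lit V} : C ∈ χ → l ∈ C → l.var ∈ S → PathLRRS ψ χ S l
  | step {p l : Lit V} {Ecl : Clause V} :
      PathLRRS ψ χ S p → Ecl ∈ ψ.matrix → p.negate ∈ Ecl →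
      l ∈ Ecl → l ≠ p.negate → l.var ∈ S → PathLRRS ψ χ S l

/-- `w ⤳ l` (pure path connection). -/
def ConnPU (ψ : DQBF V) (w l : Lit V) : Prop :=
  PathLPU ψ w (ψ.litClauses w) (ψ.Sset w.var) l

/-- `w ⤳ʳ l` (reflexive resolution path connection). -/
def ConnRRS (ψ : DQBF V) (w l : Lit V) : Prop :=
  PathLRRS ψ (ψ.litClauses w) (ψ.Sset w.var) l

/-- The pure universal dependency scheme `D^pu`. -/
def Dpu (ψ : DQBF V) (u x : V) : Prop :=
  u ∈ ψ.dep x ∧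
    ((ConnPU ψ ⟨u, true⟩ ⟨x, true⟩ ∧ ConnPU ψ ⟨u, false⟩ ⟨x, false⟩) ∨
      (ConnPU ψ ⟨u, false⟩ ⟨x, true⟩ ∧ ConnPU ψ ⟨u, true⟩ ⟨x, false⟩))

/-- The reflexive resolution path dependency scheme `D^rrs`. -/
def Drrs (ψ : DQBF V) (u x : V) : Prop :=
  u ∈ ψ.dep x ∧
    ((ConnRRS ψ ⟨u, true⟩ ⟨x, true⟩ ∧ ConnRRS ψ ⟨u, false⟩ ⟨x, false⟩) ∨
      (ConnRRS ψ ⟨u, false⟩ ⟨x, true⟩ ∧ ConnRRS ψ ⟨u, true⟩ ⟨x, false⟩))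

/-- The trivial dependency scheme `D^trv`. -/
def Dtrv (ψ : DQBF V) (u x : V) : Prop := u ∈ ψ.dep x

/-! ## LDQ(D)-Res -/

/-- Derivability of a clause in LDQ(D)-Res from the matrix of `ψ`, for a
dependency relation `D`. -/
inductive LDQDeriv (ψ : DQBF V) (D : V → V → Prop) : Clause V → Prop
  | ax {C : Clause V} : C ∈ ψ.matrix → LDQDeriv ψ D C
  | red {C : Clause V} {w : Lit V} :
      LDQDeriv ψ D (insert w C) → w.var ∈ ψ.U → w ∉ C →
      (∀ l ∈ C, l.var ∈ ψ.E → ¬ D w.var l.var) → LDQDeriv ψ D C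
  | res {Ec Fc : Clause V} {x : V} :
      x ∈ ψ.E →
      LDQDeriv ψ D (insert ⟨x, false⟩ Ec) → LDQDeriv ψ D (insert ⟨x, true⟩ Fc) →
      (⟨x, false⟩ : Lit V) ∉ Ec → (⟨x, true⟩ : Lit V) ∉ Fc →
      (∀ v ∈ Ec, v.var ∈ ψ.U → v.negate ∈ Fc → ¬ D v.var x) →
      LDQDeriv ψ D (Ec ∪ Fc)

/-- A single valid LDQ(D)-Res step, given the list of previously derived clauses. -/
def LDQStep (ψ : DQBF V) (D : V → V → Prop) (prev : List (Clause V)) (C : Clause V) : Prop :=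
  C ∈ ψ.matrix ∨
    (∃ w : Lit V, w.var ∈ ψ.U ∧ w ∉ C ∧ insert w C ∈ prev ∧
      ∀ l ∈ C, l.var ∈ ψ.E → ¬ D w.var l.var) ∨
    (∃ (x : V) (Ec Fc : Clause V), x ∈ ψ.E ∧ C = Ec ∪ Fc ∧
      (⟨x, false⟩ : Lit V) ∉ Ec ∧ (⟨x, true⟩ : Lit V) ∉ Fc ∧
      insert (⟨x, false⟩ : Lit V) Ec ∈ prev ∧ insert (⟨x, true⟩ : Lit V) Fc ∈ prev ∧
      ∀ v ∈ Ec, v.var ∈ ψ.U → v.negate ∈ Fc → ¬ D v.var x)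

/-- An LDQ(D)-Res proof: a list of clauses, each a valid step from the earlier ones. -/
def IsLDQProof (ψ : DQBF V) (D : V → V → Prop) (π : List (Clause V)) : Prop :=
  ∀ i : Fin π.length, LDQStep ψ D (π.take i.val) (π.get i)

def IsLDQRefutation (ψ : DQBF V) (D : V → V → Prop) (π : List (Clause V)) : Prop :=
  IsLDQProof ψ D π ∧ (∅ : Clause V) ∈ π

/-- A single valid Q-Res step. -/
def QResStep (ψ : DQBF V) (prev : List (Clause V)) (C : Clause V) : Prop :=
  C ∈ ψ.matrix ∨
    (∃ w : Lit V, w.var ∈ ψ.U ∧ w ∉ C ∧ w.negate ∉ C ∧ insert w C ∈ prev ∧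
      ∀ l ∈ C, l.var ∈ ψ.E → w.var ∉ ψ.dep l.var) ∨
    (∃ (x : V) (Ec Fc : Clause V), x ∈ ψ.E ∧ C = Ec ∪ Fc ∧
      (⟨x, false⟩ : Lit V) ∉ Ec ∧ (⟨x, true⟩ : Lit V) ∉ Fc ∧
      insert (⟨x, false⟩ : Lit V) Ec ∈ prev ∧ insert (⟨x, true⟩ : Lit V) Fc ∈ prev ∧
      ∀ v ∈ Ec, v.var ∈ ψ.U → v.negate ∉ Fc)

def IsQResProof (ψ : DQBF V) (π : List (Clause V)) : Prop :=
  ∀ i : Fin π.length, QResStep ψ (π.take i.val) (π.get i)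

def IsQResRefutation (ψ : DQBF V) (π : List (Clause V)) : Prop :=
  IsQResProof ψ π ∧ (∅ : Clause V) ∈ π

/-! ## QBFs: DQBFs with a linear quantifier prefix -/

structure QBF (V : Type) [DecidableEq V] extends DQBF V where
  ord : V → ℕ

/-- Well-formedness of a QBF: dependency sets are induced by the prefix order. -/
def QBF.WF (ψ : QBF V) : Prop :=
  ψ.toDQBF.WF ∧
    (∀ a ∈ ψ.U ∪ ψ.E, ∀ b ∈ ψ.U ∪ ψ.E, ψ.ord a = ψ.ord b → a = b) ∧
    ∀ x ∈ ψ.E, ∀ u, u ∈ ψ.dep x ↔ u ∈ ψ.U ∧ ψ.ord u < ψ.ord x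

/-! ## IndExt-QU-Res -/

/-- The clause `¬α` of negations of the literals of a partial assignment `α`. -/
def negAssign (α : Finset (Lit V)) : Clause V := α.image Lit.negate

/-- Size of a DQBF. -/
def DQBF.size (ψ : DQBF V) : ℕ := ψ.U.card + ψ.E.card + ∑ C ∈ ψ.matrix, (C.card + 1)

/-- IndExt-QU-Res derivations: from the DQBF `ψ0`, reach a (possibly extended)
prefix together with a set of derived clauses, in the given number of steps. -/
inductive IndExtDeriv (ψ0 : DQBF V) : DQBF V → Finset (Clause V) → ℕ → Prop
  | start : IndExtDeriv ψ0 ψ0 ψ0.matrix 0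
  | res {ψ : DQBF V} {Γ : Finset (Clause V)} {n : ℕ} {Ec Fc : Clause V} {x : V} :
      IndExtDeriv ψ0 ψ Γ n → x ∈ ψ.E →
      (⟨x, false⟩ : Lit V) ∉ Ec → (⟨x, true⟩ : Lit V) ∉ Fc →
      insert (⟨x, false⟩ : Lit V) Ec ∈ Γ → insert (⟨x, true⟩ : Lit V) Fc ∈ Γ →
      IndExtDeriv ψ0 ψ (insert (Ec ∪ Fc) Γ) (n + 1)
  | red {ψ : DQBF V} {Γ : Finset (Clause V)} {n : ℕ} {C : Clause V} {w : Lit V} :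
      IndExtDeriv ψ0 ψ Γ n → insert w C ∈ Γ → w.var ∈ ψ.U → w ∉ C → w.negate ∉ C →
      (∀ l ∈ C, l.var ∈ ψ.E → w.var ∉ ψ.dep l.var) →
      IndExtDeriv ψ0 ψ (insert C Γ) (n + 1)
  | ext {ψ : DQBF V} {Γ : Finset (Clause V)} {n : ℕ} (α : Finset (Lit V)) (y1 y2 v : V) :
      IndExtDeriv ψ0 ψ Γ n →
      (∀ a ∈ α, a.var ∈ ψ.U) → v ∉ ψ.U ∪ ψ.E → y1 ∈ ψ.U ∪ ψ.E → y2 ∈ ψ.U ∪ ψ.E →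
      IndExtDeriv ψ0
        ⟨ψ.U, insert v ψ.E,
          Function.update ψ.dep v ((ψ.depOf y1 ∪ ψ.depOf y2) \ α.image Lit.var), ψ.matrix⟩
        (insert (negAssign α ∪ ({⟨v, true⟩, ⟨y1, true⟩} : Clause V))
          (insert (negAssign α ∪ ({⟨v, true⟩, ⟨y2, true⟩} : Clause V))
            (insert (negAssign α ∪ ({⟨v, false⟩, ⟨y1, false⟩, ⟨y2, false⟩} : Clause V)) Γ)))
        (n + 1)
  | weakU {ψ : DQBF V} {Γ : Finset (Clause V)} {n : ℕ} (v : V) :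
      IndExtDeriv ψ0 ψ Γ n → v ∉ ψ.U ∪ ψ.E →
      IndExtDeriv ψ0 ⟨insert v ψ.U, ψ.E, ψ.dep, ψ.matrix⟩ Γ (n + 1)
  | weakE {ψ : DQBF V} {Γ : Finset (Clause V)} {n : ℕ} (v : V) (Dv : Finset V) :
      IndExtDeriv ψ0 ψ Γ n → v ∉ ψ.U ∪ ψ.E → Dv ⊆ ψ.U →
      IndExtDeriv ψ0 ⟨ψ.U, insert v ψ.E, Function.update ψ.dep v Dv, ψ.matrix⟩ Γ (n + 1)

/-- Substituting variables in a clause. -/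
def Clause.subst (σ : V → V) (C : Clause V) : Clause V :=
  C.image fun l => (⟨σ l.var, l.pos⟩ : Lit V)

/-! ## Unit propagation, outer variables, and DQRAT(D^pu) -/

/-- Literals derivable by unit propagation from a (possibly infinite) clause set. -/
inductive UPLit (Φ : Set (Clause V)) : Lit V → Prop
  | unit {C : Clause V} {l : Lit V} : C ∈ Φ → l ∈ C →
      (∀ l' ∈ C, l' ≠ l → UPLit Φ l'.negate) → UPLit Φ l

/-- `Φ ⊢₁ ⊥`: unit propagation derives a conflict. -/
def UPBot (Φ : Set (Clause V)) : Prop := ∃ C ∈ Φ, ∀ l ∈ C, UPLit Φ l.negate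

/-- The unit clauses negating the literals of `C`. -/
def negUnits (C : Clause V) : Set (Clause V) := {D | ∃ l ∈ C, D = ({l.negate} : Clause V)}

def DQBF.Inner (ψ : DQBF V) (u : V) : Set V := {y | y ∈ ψ.E ∧ u ∈ ψ.dep y}

/-- The set of outer variables of a variable. -/
def DQBF.Outer (ψ : DQBF V) (x : V) : Set V :=
  if x ∈ ψ.U then
    {x} ∪ ((↑(ψ.U ∪ ψ.E) : Set V) ∩ ⋂ z ∈ ψ.Inner x, {y | ψ.depOf y ⊆ ψ.dep z \ {x}})
  else {y | y ∈ ψ.U ∪ ψ.E ∧ ψ.depOf y ⊆ ψ.dep x}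

/-- `y ≲_Π x`. -/
def outerLe (ψ : DQBF V) (y x : V) : Prop := y ∈ ψ.Outer x

/-- `D_C`, the union of the dependency sets of the variables of a clause. -/
def depClause (ψ : DQBF V) (C : Clause V) : Finset V := C.biUnion fun l => ψ.depOf l.var

/-- The unit clauses used in the DQRAT side condition: outer literals of `D` negated. -/
def ratUnits (ψ : DQBF V) (D : Clause V) (l : Lit V) : Set (Clause V) :=
  {Dc | ∃ x ∈ D, x ≠ l.negate ∧ outerLe ψ x.var l.var ∧ Dc = ({x.negate} : Clause V)}

/-- DQRAT(D^pu) derivations: sequences of DQBFs, each obtained from the previous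
one by one of the rules ATA, Del, UR, DQRAT∃, DQRAT∀, BPM, D^pu. -/
inductive DQRATDeriv (ψ0 : DQBF V) : DQBF V → ℕ → Prop
  | start : DQRATDeriv ψ0 ψ0 0
  | ata {ψ : DQBF V} {n : ℕ} (C : Clause V) :
      DQRATDeriv ψ0 ψ n → UPBot ((↑ψ.matrix : Set (Clause V)) ∪ negUnits C) →
      DQRATDeriv ψ0 ⟨ψ.U, ψ.E, ψ.dep, insert C ψ.matrix⟩ (n + 1)
  | del {ψ : DQBF V} {n : ℕ} (C : Clause V) :
      DQRATDeriv ψ0 ψ n → C ∈ ψ.matrix →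
      DQRATDeriv ψ0 ⟨ψ.U, ψ.E, ψ.dep, ψ.matrix.erase C⟩ (n + 1)
  | ur {ψ : DQBF V} {n : ℕ} (C : Clause V) (l : Lit V) :
      DQRATDeriv ψ0 ψ n → insert l C ∈ ψ.matrix → l ∉ C → l.var ∈ ψ.U →
      l.var ∉ depClause ψ C →
      DQRATDeriv ψ0 ⟨ψ.U, ψ.E, ψ.dep, insert C (ψ.matrix.erase (insert l C))⟩ (n + 1)
  | ratE {ψ : DQBF V} {n : ℕ} (C : Clause V) (l : Lit V) :
      DQRATDeriv ψ0 ψ n → l.var ∈ ψ.E → l ∉ C →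
      (∀ D ∈ ψ.matrix, l.negate ∈ D →
        UPBot ((↑ψ.matrix : Set (Clause V)) ∪ negUnits (insert l C) ∪ ratUnits ψ D l)) →
      DQRATDeriv ψ0 ⟨ψ.U, ψ.E, ψ.dep, insert (insert l C) ψ.matrix⟩ (n + 1)
  | ratA {ψ : DQBF V} {n : ℕ} (C : Clause V) (l : Lit V) :
      DQRATDeriv ψ0 ψ n → l.var ∈ ψ.U → l ∉ C → insert l C ∈ ψ.matrix →
      (∀ D ∈ ψ.matrix, l.negate ∈ D →
        UPBot ((↑ψ.matrix : Set (Clause V)) ∪ negUnits C ∪ {({l} : Clause V)} ∪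
          ratUnits ψ D l)) →
      DQRATDeriv ψ0 ⟨ψ.U, ψ.E, ψ.dep, insert C (ψ.matrix.erase (insert l C))⟩ (n + 1)
  | bpm {ψ : DQBF V} {n : ℕ} (ψ' : DQBF V) :
      DQRATDeriv ψ0 ψ n → ψ.U ⊆ ψ'.U → ψ.E ⊆ ψ'.E → Disjoint ψ'.U ψ'.E →
      (∀ x ∈ ψ.E, ψ'.dep x = ψ.dep x) → (∀ x ∈ ψ'.E, ψ'.dep x ⊆ ψ'.U) →
      ψ'.matrix = ψ.matrix →
      DQRATDeriv ψ0 ψ' (n + 1)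
  | dpuStep {ψ : DQBF V} {n : ℕ} (ψ' : DQBF V) :
      DQRATDeriv ψ0 ψ n → ψ'.U = ψ.U → ψ'.E = ψ.E → ψ'.matrix = ψ.matrix →
      (∀ u x, x ∈ ψ.E → u ∉ ψ'.dep x → (u ∉ ψ.dep x ∨ ¬ Dpu ψ u x)) →
      DQRATDeriv ψ0 ψ' (n + 1)

/-- A DQRAT(D^pu) refutation of `ψ0` with `n` steps. -/
def DQRATRefutable (ψ0 : DQBF V) (n : ℕ) : Prop :=
  ∃ ψ : DQBF V, DQRATDeriv ψ0 ψ n ∧ (∅ : Clause V) ∈ ψ.matrix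

/-! ## The ts-LQParity formulas -/

inductive PVar : Type where
  | x : ℕ → PVar
  | z : PVar
  | t : ℕ → PVar
  | s : ℕ → PVar
  | b : PVar
deriving DecidableEq

def L (v : PVar) (b : Bool) : Lit PVar := ⟨v, b⟩

/-- The four clauses of `xor_l(o1, o2, o, zl)`. -/
def xorl (o1 o2 o : PVar) (zl : Lit PVar) : Finset (Clause PVar) :=
  { {zl, L o1 false, L o2 false, L o false},
    {zl, L o1 true,  L o2 true,  L o false},
    {zl, L o1 false, L o2 true,  L o true},
    {zl, L o1 true,  L o2 false, L o true} }

def tsMatrix (N : ℕ) : Finset (Clause PVar) :=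
  xorl (.x 1) (.x 2) (.t 2) (L .z true) ∪
    (Finset.Icc 3 N).biUnion (fun i => xorl (.t (i - 1)) (.x i) (.t i) (L .z true)) ∪
    xorl (.x 1) (.x 2) (.s 2) (L .z false) ∪
    (Finset.Icc 3 N).biUnion (fun i => xorl (.s (i - 1)) (.x i) (.s i) (L .z false)) ∪
    {{L .z true, L (.t N) true}, {L .z false, L (.s N) false}}

def tsDep : PVar → Finset PVar
  | .t _ => {.z}
  | .s _ => {.z}
  | .b => {.z}
  | _ => ∅

/-- The QBF ts-LQParity(N), presented as a DQBF. -/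
def tsLQParity (N : ℕ) : DQBF PVar where
  U := {.z}
  E := (Finset.Icc 1 N).image PVar.x ∪ (Finset.Icc 2 N).image PVar.t ∪
    (Finset.Icc 2 N).image PVar.s
  dep := tsDep
  matrix := tsMatrix N

def bridgedMatrix (N : ℕ) : Finset (Clause PVar) :=
  tsMatrix N ∪
    { {L .z true, L (.t N) false, L .b true}, {L .z true, L (.t N) true, L .b false},
      {L .z false, L (.s N) false, L .b true}, {L .z false, L (.s N) true, L .b false} }

/-- The QBF Bridged ts-LQParity(N), presented as a DQBF. -/
def bridged (N : ℕ) : DQBF PVar where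
  U := {.z}
  E := (Finset.Icc 1 N).image PVar.x ∪ (Finset.Icc 2 N).image PVar.t ∪
    (Finset.Icc 2 N).image PVar.s ∪ {.b}
  dep := tsDep
  matrix := bridgedMatrix N

/-! ## The NP-hardness gadget -/

inductive GVar (W : Type) : Type where
  | v : W → GVar W
  | u : GVar W
  | x : GVar W
deriving DecidableEq

/-- The gadget DQBF `∀(V ∪ {u}) ∃x(V ∪ {u}). (⋁_{v ∈ V} v) ∨ u ∨ ¬x`. -/
def gadget {W : Type} [DecidableEq W] (Vs : Finset W) : DQBF (GVar W) where
  U := Vs.image GVar.v ∪ {GVar.u}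
  E := {GVar.x}
  dep := fun y => if y = GVar.x then Vs.image GVar.v ∪ {GVar.u} else ∅
  matrix := {Vs.image (fun w => (⟨GVar.v w, true⟩ : Lit (GVar W))) ∪
    ({⟨GVar.u, true⟩, ⟨GVar.x, false⟩} : Clause (GVar W))}

/-- The Skolem function `f_x = φ(V) ∧ u`. -/
def gadgetSkolem {W : Type} [DecidableEq W] (φ : Finset (Clause W)) :
    GVar W → (GVar W → Bool) → Bool := fun y β =>
  if y = GVar.x then
    (decide (∀ C ∈ φ, ∃ l ∈ C, β (GVar.v l.var) = l.pos)) && β GVar.u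
  else false

/-! ### Auxiliary machinery for Statement 5 -/

section PFDAux

variable {V : Type} [DecidableEq V]

/-- The DQBF obtained from `B` by adding the clauses `Γ` to the matrix. -/
def extMat (B : DQBF V) (Γ : Finset (Clause V)) : DQBF V :=
  ⟨B.U, B.E, B.dep, B.matrix ∪ Γ⟩

lemma pfd_pathlpu_mono {ψ ψ' : DQBF V} (hm : ψ.matrix ⊆ ψ'.matrix) {w : Lit V}
    {χ χ' : Finset (Clause V)} (hχ : χ ⊆ χ') {S : Finset V} {l : Lit V}
    (h : PathLPU ψ w χ S l) : PathLPU ψ' w χ' S l := by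
  induction h with
  | base hC hl hS => exact PathLPU.base (hχ hC) hl hS
  | step hpth hE hp hw hl hne hS ih => exact PathLPU.step ih (hm hE) hp hw hl hne hS

lemma pfd_conn_var {ψ : DQBF V} {w l : Lit V} (h : ConnPU ψ w l) :
    l.var ∈ ψ.Sset w.var := by
  cases h with
  | base _ _ hS => exact hS
  | step _ _ _ _ _ _ hS => exact hS

lemma pfd_conn_mono {ψ ψ' : DQBF V} {w l : Lit V} (h : ConnPU ψ w l)
    (hm : ψ.matrix ⊆ ψ'.matrix) (hS : ψ.Sset w.var = ψ'.Sset w.var) :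
    ConnPU ψ' w l := by
  have hχ : ψ.litClauses w ⊆ ψ'.litClauses w := by
    intro D hD
    rcases Finset.mem_filter.1 hD with ⟨h1, h2⟩
    exact Finset.mem_filter.2 ⟨hm h1, h2⟩
  unfold ConnPU at h ⊢
  rw [← hS]
  exact pfd_pathlpu_mono hm hχ h

lemma pfd_dpu_pair {ψ : DQBF V} {u y : V} (hdep : u ∈ ψ.dep y) (b e : Bool)
    (h1 : ConnPU ψ ⟨u, b⟩ ⟨y, e⟩) (h2 : ConnPU ψ ⟨u, !b⟩ ⟨y, !e⟩) : Dpu ψ u y := by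
  refine ⟨hdep, ?_⟩
  cases b <;> cases e <;>
    simp only [Bool.not_false, Bool.not_true] at h1 h2
  · exact Or.inl ⟨h2, h1⟩
  · exact Or.inr ⟨h1, h2⟩
  · exact Or.inr ⟨h2, h1⟩
  · exact Or.inl ⟨h1, h2⟩

lemma pfd_dpu_iff_inv (B : DQBF V) (u : V) (Γ : Finset (Clause V))
    (hInv : ∀ (b : Bool) (l : Lit V), ConnPU (extMat B Γ) ⟨u, b⟩ l ↔ ConnPU B ⟨u, b⟩ l)
    (y : V) : Dpu (extMat B Γ) u y ↔ Dpu B u y := by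
  unfold Dpu
  exact and_congr Iff.rfl
    (or_congr (and_congr (hInv _ _) (hInv _ _)) (and_congr (hInv _ _) (hInv _ _)))

/-- Simulation: if `C` behaves like a start clause (H1) and like a step clause (H2)
with respect to the pure paths of `extMat B Γ`, then adding `C` creates no new
pure-path connections. -/
lemma pfd_sim (B : DQBF V) (u : V) (Γ : Finset (Clause V)) (C : Clause V) (b : Bool)
    (H1 : (⟨u, b⟩ : Lit V) ∈ C → ∀ l ∈ C, l.var ∈ (extMat B Γ).Sset u →
      ConnPU (extMat B Γ) ⟨u, b⟩ l)
    (H2 : (⟨u, !b⟩ : Lit V) ∉ C → ∀ p : Lit V, ConnPU (extMat B Γ) ⟨u, b⟩ p →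
      p.negate ∈ C → ∀ l ∈ C, l ≠ p.negate → l.var ∈ (extMat B Γ).Sset u →
      ConnPU (extMat B Γ) ⟨u, b⟩ l)
    {l : Lit V}
    (h : PathLPU (extMat B (insert C Γ)) ⟨u, b⟩
      ((extMat B (insert C Γ)).litClauses ⟨u, b⟩) ((extMat B Γ).Sset u) l) :
    ConnPU (extMat B Γ) ⟨u, b⟩ l := by
  induction h with
  | base hD hl hS =>
    rcases Finset.mem_filter.1 hD with ⟨hDm, hw⟩
    rcases Finset.mem_union.1 hDm with hDm | hDm
    · exact PathLPU.base (Finset.mem_filter.2 ⟨Finset.mem_union_left _ hDm, hw⟩) hl hS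
    · rcases Finset.mem_insert.1 hDm with rfl | hDm
      · exact H1 hw _ hl hS
      · exact PathLPU.base (Finset.mem_filter.2 ⟨Finset.mem_union_right _ hDm, hw⟩) hl hS
  | step hpth hE hp hw hl hne hS ih =>
    rcases Finset.mem_union.1 hE with hE | hE
    · exact PathLPU.step ih (Finset.mem_union_left _ hE) hp hw hl hne hS
    · rcases Finset.mem_insert.1 hE with rfl | hE
      · exact H2 hw _ ih hp _ hl hne hS
      · exact PathLPU.step ih (Finset.mem_union_right _ hE) hp hw hl hne hS

/-- Using a resolvent as a start clause can be simulated by the two premises. -/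
lemma pfd_helper_base (φ : DQBF V) (u : V) (b : Bool) (G H : Clause V) (xg xh : Lit V)
    (hgh : xg.negate = xh) (hxhu : xh.var ≠ u)
    (hD1 : insert xg G ∈ φ.matrix) (hD2 : insert xh H ∈ φ.matrix)
    (hxhH : xh ∉ H) (hxS : xg.var ∈ φ.Sset u)
    (hw : (⟨u, b⟩ : Lit V) ∈ G) (hblock : (⟨u, !b⟩ : Lit V) ∈ H → False)
    {l : Lit V} (hl : l ∈ G ∨ l ∈ H) (hlS : l.var ∈ φ.Sset u) :
    ConnPU φ ⟨u, b⟩ l := by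
  have hD1χ : insert xg G ∈ φ.litClauses ⟨u, b⟩ :=
    Finset.mem_filter.2 ⟨hD1, Finset.mem_insert_of_mem hw⟩
  cases hl with
  | inl hlG => exact PathLPU.base hD1χ (Finset.mem_insert_of_mem hlG) hlS
  | inr hlH =>
    by_cases hnwH : (⟨u, !b⟩ : Lit V) ∈ H
    · exact (hblock hnwH).elim
    · have hxgC : ConnPU φ ⟨u, b⟩ xg :=
        PathLPU.base hD1χ (Finset.mem_insert_self _ _) hxS
      refine PathLPU.step hxgC hD2 ?_ ?_ (Finset.mem_insert_of_mem hlH) ?_ hlS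
      · rw [hgh]; exact Finset.mem_insert_self _ _
      · intro hmem
        rcases Finset.mem_insert.1 hmem with he | hin
        · exact hxhu (by rw [← he]; rfl)
        · exact hnwH hin
      · rw [hgh]
        intro he
        exact hxhH (by rw [← he]; exact hlH)

/-- Using a resolvent as a step clause can be simulated by the two premises. -/
lemma pfd_helper_step (φ : DQBF V) (u : V) (b : Bool) (G H : Clause V) (xg xh : Lit V)
    (hgh : xg.negate = xh) (hxgu : xg.var ≠ u) (hxhu : xh.var ≠ u)
    (hD1 : insert xg G ∈ φ.matrix) (hD2 : insert xh H ∈ φ.matrix)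
    (hxgG : xg ∉ G) (hxhH : xh ∉ H) (hxS : xg.var ∈ φ.Sset u)
    (hnwG : (⟨u, !b⟩ : Lit V) ∉ G) (hnwH : (⟨u, !b⟩ : Lit V) ∉ H)
    {p : Lit V} (hp : ConnPU φ ⟨u, b⟩ p) (hpG : p.negate ∈ G)
    {l : Lit V} (hl : l ∈ G ∨ l ∈ H) (hne : l ≠ p.negate) (hlS : l.var ∈ φ.Sset u) :
    ConnPU φ ⟨u, b⟩ l := by
  have hnwD1 : (⟨u, b⟩ : Lit V).negate ∉ insert xg G := by
    intro hmem
    rcases Finset.mem_insert.1 hmem with he | hin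
    · exact hxgu (by rw [← he]; rfl)
    · exact hnwG hin
  have h1 : ∀ m : Lit V, m ∈ insert xg G → m ≠ p.negate → m.var ∈ φ.Sset u →
      ConnPU φ ⟨u, b⟩ m :=
    fun m hm hmne hmS =>
      PathLPU.step hp hD1 (Finset.mem_insert_of_mem hpG) hnwD1 hm hmne hmS
  cases hl with
  | inl hlG => exact h1 l (Finset.mem_insert_of_mem hlG) hne hlS
  | inr hlH =>
    have hxgC := h1 xg (Finset.mem_insert_self _ _)
      (fun he => hxgG (by rw [he]; exact hpG)) hxS
    refine PathLPU.step hxgC hD2 ?_ ?_ (Finset.mem_insert_of_mem hlH) ?_ hlS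
    · rw [hgh]; exact Finset.mem_insert_self _ _
    · intro hmem
      rcases Finset.mem_insert.1 hmem with he | hin
      · exact hxhu (by rw [← he]; rfl)
      · exact hnwH hin
    · rw [hgh]
      intro he
      exact hxhH (by rw [← he]; exact hlH)

/-- Core invariant: any LDQ(D^pu)-derivable clause can be added (together with the
intermediate clauses of its derivation) without changing the pure-path connections
of the outermost universal `u`. -/
lemma pfd_main_inv (B : DQBF V) (u : V) (hu : u ∈ B.U) (hdisj : Disjoint B.U B.E)
    (hSu : ∀ y ∈ B.E, u ∈ B.dep y)
    {C : Clause V} (hC : LDQDeriv B (Dpu B) C) :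
    ∀ Γ : Finset (Clause V),
      (∀ (b : Bool) (l : Lit V), ConnPU (extMat B Γ) ⟨u, b⟩ l ↔ ConnPU B ⟨u, b⟩ l) →
      ∃ Γ' : Finset (Clause V), Γ ⊆ Γ' ∧
        (∀ (b : Bool) (l : Lit V), ConnPU (extMat B Γ') ⟨u, b⟩ l ↔ ConnPU B ⟨u, b⟩ l) ∧
        C ∈ B.matrix ∪ Γ' := by
  induction hC with
  | @ax C0 h =>
    intro Γ hInv
    exact ⟨Γ, Finset.Subset.refl _, hInv, Finset.mem_union_left _ h⟩
  | @red C0 w0 hprem hU hnC hside ih =>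
    intro Γ hInv
    obtain ⟨Γ₁, hsub, hInv₁, hmem⟩ := ih Γ hInv
    refine ⟨insert C0 Γ₁, hsub.trans (Finset.subset_insert _ _), ?_,
      Finset.mem_union_right _ (Finset.mem_insert_self _ _)⟩
    intro b l
    constructor
    · intro h
      apply (hInv₁ b l).1
      refine pfd_sim B u Γ₁ C0 b ?_ ?_ h
      · -- H1
        intro hw l' hl' hS'
        exact PathLPU.base
          (Finset.mem_filter.2 ⟨hmem, Finset.mem_insert_of_mem hw⟩)
          (Finset.mem_insert_of_mem hl') hS'
      · -- H2
        intro hnw p hp hpC l' hl' hne' hS'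
        by_cases hcase : w0 = (⟨u, !b⟩ : Lit V)
        · exfalso
          have hpS : p.var ∈ (extMat B Γ₁).Sset u := pfd_conn_var hp
          have hpE : p.var ∈ B.E ∧ u ∈ B.dep p.var := Finset.mem_filter.1 hpS
          have hsideB : ¬ Dpu B u p.var := by
            have h' := hside p.negate hpC hpE.1
            rw [hcase] at h'
            exact h'
          have hsideA : ¬ Dpu (extMat B Γ₁) u p.var :=
            fun hdd => hsideB ((pfd_dpu_iff_inv B u Γ₁ hInv₁ p.var).1 hdd)
          apply hsideA
          refine pfd_dpu_pair hpE.2 b p.pos hp ?_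
          exact PathLPU.base
            (Finset.mem_filter.2 ⟨hmem, Finset.mem_insert.2 (Or.inl hcase.symm)⟩)
            (Finset.mem_insert_of_mem hpC) hpS
        · refine PathLPU.step hp hmem (Finset.mem_insert_of_mem hpC) ?_
            (Finset.mem_insert_of_mem hl') hne' hS'
          intro hmem'
          rcases Finset.mem_insert.1 hmem' with he | hin
          · exact hcase he.symm
          · exact hnw hin
    · intro h
      exact pfd_conn_mono h Finset.subset_union_left rfl
  | @res Ec Fc x hx hp1 hp2 hnE hnF hside ih1 ih2 =>
    intro Γ hInv
    obtain ⟨Γ₁, hs1, hInv₁, hm1⟩ := ih1 Γ hInv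
    obtain ⟨Γ₂, hs2, hInv₂, hm2'⟩ := ih2 Γ₁ hInv₁
    have hm1' : insert (⟨x, false⟩ : Lit V) Ec ∈ B.matrix ∪ Γ₂ :=
      Finset.union_subset_union (Finset.Subset.refl _) hs2 hm1
    have hxu : x ≠ u := fun e =>
      (Finset.disjoint_left.1 hdisj hu) (by rw [← e]; exact hx)
    have hxS : x ∈ (extMat B Γ₂).Sset u := Finset.mem_filter.2 ⟨hx, hSu x hx⟩
    refine ⟨insert (Ec ∪ Fc) Γ₂, hs1.trans (hs2.trans (Finset.subset_insert _ _)), ?_,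
      Finset.mem_union_right _ (Finset.mem_insert_self _ _)⟩
    intro b l
    constructor
    · intro h
      apply (hInv₂ b l).1
      refine pfd_sim B u Γ₂ (Ec ∪ Fc) b ?_ ?_ h
      · -- H1
        intro hw l' hl' hS'
        have hblock : ((⟨u, b⟩ : Lit V) ∈ Ec ∧ (⟨u, !b⟩ : Lit V) ∈ Fc) ∨
            ((⟨u, b⟩ : Lit V) ∈ Fc ∧ (⟨u, !b⟩ : Lit V) ∈ Ec) → False := by
          rintro (⟨h1', h2'⟩ | ⟨h1', h2'⟩)
          · have hnd : ¬ Dpu B u x := hside ⟨u, b⟩ h1' hu h2'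
            apply hnd
            apply (pfd_dpu_iff_inv B u Γ₂ hInv₂ x).1
            refine pfd_dpu_pair (hSu x hx) b false ?_ ?_
            · exact PathLPU.base
                (Finset.mem_filter.2 ⟨hm1', Finset.mem_insert_of_mem h1'⟩)
                (Finset.mem_insert_self _ _) hxS
            · exact PathLPU.base
                (Finset.mem_filter.2 ⟨hm2', Finset.mem_insert_of_mem h2'⟩)
                (Finset.mem_insert_self _ _) hxS
          · have hneg : (⟨u, !b⟩ : Lit V).negate = (⟨u, b⟩ : Lit V) := by
              simp [Lit.negate]
            have hnd : ¬ Dpu B u x :=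
              hside ⟨u, !b⟩ h2' hu (by rw [hneg]; exact h1')
            apply hnd
            apply (pfd_dpu_iff_inv B u Γ₂ hInv₂ x).1
            refine pfd_dpu_pair (hSu x hx) b true ?_ ?_
            · exact PathLPU.base
                (Finset.mem_filter.2 ⟨hm2', Finset.mem_insert_of_mem h1'⟩)
                (Finset.mem_insert_self _ _) hxS
            · exact PathLPU.base
                (Finset.mem_filter.2 ⟨hm1', Finset.mem_insert_of_mem h2'⟩)
                (Finset.mem_insert_self _ _) hxS
        rcases Finset.mem_union.1 hw with hwE | hwF
        · exact pfd_helper_base (extMat B Γ₂) u b Ec Fc ⟨x, false⟩ ⟨x, true⟩ rfl hxu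
            hm1' hm2' hnF hxS hwE (fun hn => hblock (Or.inl ⟨hwE, hn⟩))
            (Finset.mem_union.1 hl') hS'
        · exact pfd_helper_base (extMat B Γ₂) u b Fc Ec ⟨x, true⟩ ⟨x, false⟩ rfl hxu
            hm2' hm1' hnE hxS hwF (fun hn => hblock (Or.inr ⟨hwF, hn⟩))
            ((Finset.mem_union.1 hl').symm) hS'
      · -- H2
        intro hnw p hp hpC l' hl' hne' hS'
        have hnwE : (⟨u, !b⟩ : Lit V) ∉ Ec := fun hh => hnw (Finset.mem_union_left _ hh)
        have hnwF : (⟨u, !b⟩ : Lit V) ∉ Fc := fun hh => hnw (Finset.mem_union_right _ hh)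
        rcases Finset.mem_union.1 hpC with hpE | hpF
        · exact pfd_helper_step (extMat B Γ₂) u b Ec Fc ⟨x, false⟩ ⟨x, true⟩ rfl hxu hxu
            hm1' hm2' hnE hnF hxS hnwE hnwF hp hpE (Finset.mem_union.1 hl') hne' hS'
        · exact pfd_helper_step (extMat B Γ₂) u b Fc Ec ⟨x, true⟩ ⟨x, false⟩ rfl hxu hxu
            hm2' hm1' hnF hnE hxS hnwF hnwE hp hpF ((Finset.mem_union.1 hl').symm) hne' hS'
    · intro h
      exact pfd_conn_mono h Finset.subset_union_left rfl

end PFDAux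

/-- Learned clauses preserve D^pu of an outermost universal variable.
If `u` is the outermost variable of the QBF `∀uΠφ` and `u` is universal, and `C` is
derivable in LDQ(D^pu)-Res, then for every existential `x`,
`(u,x) ∈ D^pu(∀uΠφ)` iff `(u,x) ∈ D^pu(∀uΠ(φ ∧ C))`. -/
theorem learned_clauses_preserve_dpu {V : Type} [DecidableEq V] (ψ : QBF V) (hWF : ψ.WF)
    (u : V) (hu : u ∈ ψ.U)
    (houter : ∀ y ∈ ψ.U ∪ ψ.E, y ≠ u → ψ.ord u < ψ.ord y)
    (C : Clause V) (hC : LDQDeriv ψ.toDQBF (Dpu ψ.toDQBF) C)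
    (x : V) (hx : x ∈ ψ.E) :
    Dpu ψ.toDQBF u x ↔
      Dpu (⟨ψ.U, ψ.E, ψ.dep, insert C ψ.matrix⟩ : DQBF V) u x := by
  obtain ⟨⟨hdisj, hdepU, hclause⟩, hinj, hdep⟩ := hWF
  have hSu : ∀ y ∈ ψ.toDQBF.E, u ∈ ψ.toDQBF.dep y := by
    intro y hy
    have hyne : y ≠ u := fun e =>
      (Finset.disjoint_left.1 hdisj hu) (by rw [← e]; exact hy)
    exact (hdep y hy u).2 ⟨hu, houter y (Finset.mem_union_right _ hy) hyne⟩
  have hInv0 : ∀ (b : Bool) (l : Lit V),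
      ConnPU (extMat ψ.toDQBF ∅) ⟨u, b⟩ l ↔ ConnPU ψ.toDQBF ⟨u, b⟩ l := by
    intro b l
    constructor
    · intro h
      exact pfd_conn_mono h
        (Finset.union_subset (Finset.Subset.refl _) (Finset.empty_subset _)) rfl
    · intro h
      exact pfd_conn_mono h Finset.subset_union_left rfl
  obtain ⟨Γ', hsub, hInv, hmem⟩ := pfd_main_inv ψ.toDQBF u hu hdisj hSu hC ∅ hInv0
  have hmat : insert C ψ.matrix ⊆ (extMat ψ.toDQBF Γ').matrix := by
    intro D hD
    rcases Finset.mem_insert.1 hD with rfl | hD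
    · exact hmem
    · exact Finset.mem_union_left _ hD
  have htrans : ∀ (b : Bool) (l : Lit V),
      ConnPU (⟨ψ.U, ψ.E, ψ.dep, insert C ψ.matrix⟩ : DQBF V) ⟨u, b⟩ l →
        ConnPU ψ.toDQBF ⟨u, b⟩ l := fun b l h =>
    (hInv b l).1 (pfd_conn_mono h hmat rfl)
  constructor
  · rintro ⟨hd, hpat⟩
    refine ⟨hd, ?_⟩
    exact hpat.imp
      (And.imp (fun hh => pfd_conn_mono hh (Finset.subset_insert _ _) rfl)
        (fun hh => pfd_conn_mono hh (Finset.subset_insert _ _) rfl))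
      (And.imp (fun hh => pfd_conn_mono hh (Finset.subset_insert _ _) rfl)
        (fun hh => pfd_conn_mono hh (Finset.subset_insert _ _) rfl))
  · rintro ⟨hd, hpat⟩
    refine ⟨hd, ?_⟩
    exact hpat.imp
      (And.imp (htrans _ _) (htrans _ _))
      (And.imp (htrans _ _) (htrans _ _))
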